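/- arXiv:2601.08731 — 2 statements merged into one kernel-verified Lean document; each statement's English description precedes it below -/
import Mathlib

section
/- One-step distribution propagation bound: let d, d' be PMFs on a finite set S × A, and let T, T̂: S × A → PMF(S) be two transition kernels. Define next-state distributions m(s') = Σ_{(s,a)} d(s,a) T(s,a)(s') and m̂(s') = Σ_{(s,a)} d'(s,a) T̂(s,a)(s'). Then D_TV(m, m̂) ≤ D_TV(d, d') + E_{(s,a)∼d'}[D_TV(T(s,a), T̂(s,a))]. -/
theorem stmt12 {S A : Type*} [Fintype S] [Fintype A]
    (d d' : S × A → ℝ) (T That : S × A → S → ℝ)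
    (hd0 : ∀ x, 0 ≤ d x) (hd1 : ∑ x, d x = 1)
    (hd'0 : ∀ x, 0 ≤ d' x) (hd'1 : ∑ x, d' x = 1)
    (hT0 : ∀ sa s', 0 ≤ T sa s') (hT1 : ∀ sa, ∑ s', T sa s' = 1)
    (hThat0 : ∀ sa s', 0 ≤ That sa s') (hThat1 : ∀ sa, ∑ s', That sa s' = 1) :
    (1 / 2) * ∑ s', |(∑ sa, d sa * T sa s') - ∑ sa, d' sa * That sa s'| ≤
      (1 / 2) * (∑ sa, |d sa - d' sa|) +
        ∑ sa, d' sa * ((1 / 2) * ∑ s', |T sa s' - That sa s'|) := by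
  have key : ∑ s', |(∑ sa, d sa * T sa s') - ∑ sa, d' sa * That sa s'| ≤
      (∑ sa, |d sa - d' sa|) + ∑ sa, d' sa * (∑ s', |T sa s' - That sa s'|) := by
    have h1 : ∀ s' : S, |(∑ sa, d sa * T sa s') - ∑ sa, d' sa * That sa s'| ≤
        (∑ sa, |d sa - d' sa| * T sa s') + ∑ sa, d' sa * |T sa s' - That sa s'| := by
      intro s'
      have : (∑ sa, d sa * T sa s') - ∑ sa, d' sa * That sa s' =
          (∑ sa, (d sa - d' sa) * T sa s') + ∑ sa, d' sa * (T sa s' - That sa s') := by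
        rw [← Finset.sum_add_distrib, ← Finset.sum_sub_distrib]; congr 1; ext sa; ring
      rw [this]
      calc |(∑ sa, (d sa - d' sa) * T sa s') + ∑ sa, d' sa * (T sa s' - That sa s')|
          ≤ |∑ sa, (d sa - d' sa) * T sa s'| + |∑ sa, d' sa * (T sa s' - That sa s')| :=
            abs_add_le _ _
        _ ≤ (∑ sa, |d sa - d' sa| * T sa s') + ∑ sa, d' sa * |T sa s' - That sa s'| := by
            gcongr
            · calc |∑ sa, (d sa - d' sa) * T sa s'| ≤ ∑ sa, |(d sa - d' sa) * T sa s'| :=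
                  Finset.abs_sum_le_sum_abs _ _
                _ = ∑ sa, |d sa - d' sa| * T sa s' := by
                  apply Finset.sum_congr rfl; intro sa _
                  rw [abs_mul, abs_of_nonneg (hT0 sa s')]
            · calc |∑ sa, d' sa * (T sa s' - That sa s')| ≤
                  ∑ sa, |d' sa * (T sa s' - That sa s')| := Finset.abs_sum_le_sum_abs _ _
                _ = ∑ sa, d' sa * |T sa s' - That sa s'| := by
                  apply Finset.sum_congr rfl; intro sa _
                  rw [abs_mul, abs_of_nonneg (hd'0 sa)]
    calc ∑ s', |(∑ sa, d sa * T sa s') - ∑ sa, d' sa * That sa s'|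
        ≤ ∑ s', ((∑ sa, |d sa - d' sa| * T sa s') + ∑ sa, d' sa * |T sa s' - That sa s'|) :=
          Finset.sum_le_sum fun s' _ => h1 s'
      _ = (∑ sa, |d sa - d' sa|) + ∑ sa, d' sa * (∑ s', |T sa s' - That sa s'|) := by
          rw [Finset.sum_add_distrib, Finset.sum_comm, Finset.sum_comm (γ := S)]
          congr 1
          · apply Finset.sum_congr rfl; intro sa _
            rw [← Finset.mul_sum, hT1, mul_one]
          · apply Finset.sum_congr rfl; intro sa _
            rw [← Finset.mul_sum]
  have h2 : ∑ sa, d' sa * ((1 / 2) * ∑ s', |T sa s' - That sa s'|) =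
      (1 / 2) * ∑ sa, d' sa * (∑ s', |T sa s' - That sa s'|) := by
    rw [Finset.mul_sum]; apply Finset.sum_congr rfl; intro sa _; ring
  rw [h2]
  nlinarith [key]
end

section
/- Iterated simulation lemma: under the setup of the one-step propagation bound, if the same policy kernel is applied at every step and the per-step expected model error is uniformly bounded by α (i.e., E_{(s,a)∼d_t}[D_TV(T(s,a), T̂(s,a))] ≤ α for all t), then the time-t marginals under the two transition kernels satisfy D_TV(d_t, d̂_t) ≤ t · α for all t ∈ ℕ. -/
theorem stmt13 {S A : Type*} [Fintype S] [Fintype A]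
    (pol : S → A → ℝ) (T That : S × A → S → ℝ)
    (d dhat : ℕ → S × A → ℝ) (α : ℝ)
    (hpol0 : ∀ s a, 0 ≤ pol s a) (hpol1 : ∀ s, ∑ a, pol s a = 1)
    (hT0 : ∀ sa s', 0 ≤ T sa s') (hT1 : ∀ sa, ∑ s', T sa s' = 1)
    (hThat0 : ∀ sa s', 0 ≤ That sa s') (hThat1 : ∀ sa, ∑ s', That sa s' = 1)
    (hd00 : ∀ x, 0 ≤ d 0 x) (hd01 : ∑ x, d 0 x = 1)
    (hinit : d 0 = dhat 0)
    (hrec : ∀ t s a, d (t + 1) (s, a) = pol s a * ∑ sa, d t sa * T sa s)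
    (hrechat : ∀ t s a, dhat (t + 1) (s, a) = pol s a * ∑ sa, dhat t sa * That sa s)
    (herr : ∀ t, ∑ sa, d t sa * ((1 / 2) * ∑ s', |T sa s' - That sa s'|) ≤ α)
    (t : ℕ) :
    (1 / 2) * ∑ sa, |d t sa - dhat t sa| ≤ (t : ℝ) * α := by
  have hd0 : ∀ t x, 0 ≤ d t x := by
    intro t
    induction t with
    | zero => exact hd00
    | succ t ih =>
      rintro ⟨s, a⟩
      rw [hrec]
      exact mul_nonneg (hpol0 s a)
        (Finset.sum_nonneg fun sa _ => mul_nonneg (ih sa) (hT0 sa s))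
  induction t with
  | zero => simp [hinit]
  | succ t ih =>
    have key : ∑ sa, |d (t+1) sa - dhat (t+1) sa|
        ≤ (∑ sa, d t sa * ∑ s', |T sa s' - That sa s'|)
          + ∑ sa, |d t sa - dhat t sa| := by
      have hstep : ∀ s : S, ∑ a, |d (t+1) (s, a) - dhat (t+1) (s, a)|
          ≤ (∑ sa, d t sa * |T sa s - That sa s|)
            + ∑ sa, |d t sa - dhat t sa| * That sa s := by
        intro s
        have hbound : ∀ a, |d (t+1) (s, a) - dhat (t+1) (s, a)|
            ≤ pol s a * ((∑ sa, d t sa * |T sa s - That sa s|)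
              + ∑ sa, |d t sa - dhat t sa| * That sa s) := by
          intro a
          rw [hrec, hrechat, ← mul_sub, abs_mul, abs_of_nonneg (hpol0 s a)]
          refine mul_le_mul_of_nonneg_left ?_ (hpol0 s a)
          calc |∑ sa, d t sa * T sa s - ∑ sa, dhat t sa * That sa s|
              = |∑ sa, (d t sa * (T sa s - That sa s)
                  + (d t sa - dhat t sa) * That sa s)| := by
                rw [← Finset.sum_sub_distrib]
                congr 1
                exact Finset.sum_congr rfl fun sa _ => by ring
            _ ≤ ∑ sa, |d t sa * (T sa s - That sa s)
                  + (d t sa - dhat t sa) * That sa s| :=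
                Finset.abs_sum_le_sum_abs _ _
            _ ≤ ∑ sa, (d t sa * |T sa s - That sa s|
                  + |d t sa - dhat t sa| * That sa s) := by
                refine Finset.sum_le_sum fun sa _ => ?_
                calc |d t sa * (T sa s - That sa s)
                      + (d t sa - dhat t sa) * That sa s|
                    ≤ |d t sa * (T sa s - That sa s)|
                      + |(d t sa - dhat t sa) * That sa s| := abs_add_le _ _
                  _ = d t sa * |T sa s - That sa s|
                      + |d t sa - dhat t sa| * That sa s := by
                      rw [abs_mul, abs_mul, abs_of_nonneg (hd0 t sa),
                        abs_of_nonneg (hThat0 sa s)]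
            _ = (∑ sa, d t sa * |T sa s - That sa s|)
                  + ∑ sa, |d t sa - dhat t sa| * That sa s :=
                Finset.sum_add_distrib
        calc ∑ a, |d (t+1) (s, a) - dhat (t+1) (s, a)|
            ≤ ∑ a, pol s a * ((∑ sa, d t sa * |T sa s - That sa s|)
                + ∑ sa, |d t sa - dhat t sa| * That sa s) :=
              Finset.sum_le_sum fun a _ => hbound a
          _ = (∑ a, pol s a) * ((∑ sa, d t sa * |T sa s - That sa s|)
                + ∑ sa, |d t sa - dhat t sa| * That sa s) :=
              (Finset.sum_mul _ _ _).symm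
          _ = _ := by rw [hpol1 s, one_mul]
      calc ∑ sa, |d (t+1) sa - dhat (t+1) sa|
          = ∑ s, ∑ a, |d (t+1) (s, a) - dhat (t+1) (s, a)| :=
            Fintype.sum_prod_type _
        _ ≤ ∑ s, ((∑ sa, d t sa * |T sa s - That sa s|)
              + ∑ sa, |d t sa - dhat t sa| * That sa s) :=
            Finset.sum_le_sum fun s _ => hstep s
        _ = (∑ s, ∑ sa, d t sa * |T sa s - That sa s|)
              + ∑ s, ∑ sa, |d t sa - dhat t sa| * That sa s :=
            Finset.sum_add_distrib
        _ = (∑ sa, d t sa * ∑ s', |T sa s' - That sa s'|)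
              + ∑ sa, |d t sa - dhat t sa| := by
            rw [Finset.sum_comm, Finset.sum_comm (γ := S)]
            congr 1
            · exact Finset.sum_congr rfl fun sa _ => (Finset.mul_sum _ _ _).symm
            · refine Finset.sum_congr rfl fun sa _ => ?_
              rw [← Finset.mul_sum, hThat1 sa, mul_one]
    have h1 : (1/2 : ℝ) * ∑ sa, d t sa * ∑ s', |T sa s' - That sa s'| ≤ α := by
      calc (1/2 : ℝ) * ∑ sa, d t sa * ∑ s', |T sa s' - That sa s'|
          = ∑ sa, d t sa * ((1/2) * ∑ s', |T sa s' - That sa s'|) := by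
            rw [Finset.mul_sum]
            exact Finset.sum_congr rfl fun sa _ => by ring
        _ ≤ α := herr t
    have := ih
    push_cast
    nlinarith [key]
end
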